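/- Let s ∈ W be an involution. For λ ∈ V set μ := {λ + s(λ)} and g(λ) := 2⟨{μ − ρ} − (μ − ρ), ρ⟩. Then for every λ ∈ V one has 0 ≤ g(λ) ≤ ‖2ρ‖². -/

import Mathlib

open scoped RealInnerProductSpace

noncomputable section

/-- The pairing `⟨v, a∨⟩ = 2⟪v,a⟫/⟪a,a⟫` of `v` against the coroot of `a`. -/
def copair {V : Type*} [NormedAddCommGroup V] [InnerProductSpace ℝ V] (v a : V) : ℝ :=
  2 * ⟪v, a⟫ / ⟪a, a⟫

/-- The orthogonal reflection `s_a` in the hyperplane orthogonal to `a`,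
as a linear isometry of `V`. -/
def sRefl {V : Type*} [NormedAddCommGroup V] [InnerProductSpace ℝ V] [FiniteDimensional ℝ V]
    (a : V) : V ≃ₗᵢ[ℝ] V :=
  Submodule.reflection (ℝ ∙ a)ᗮ

/-- A finite crystallographic reduced root system `Φ` spanning a finite-dimensional real inner
product space `V`, together with a choice of positive roots `pos`, simple roots `sroot`,
and fundamental weights `fw`. -/
structure RootSystemCtx (V : Type*) [NormedAddCommGroup V] [InnerProductSpace ℝ V]
    [FiniteDimensional ℝ V] where
  l : ℕ
  Φ : Finset V
  pos : Finset V
  sroot : Fin l → V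
  fw : Fin l → V
  nonzero : ∀ a ∈ Φ, a ≠ (0 : V)
  span_top : Submodule.span ℝ (Φ : Set V) = ⊤
  reduced : ∀ a ∈ Φ, ∀ t : ℝ, t • a ∈ Φ → t = 1 ∨ t = -1
  refl_mem : ∀ a ∈ Φ, ∀ b ∈ Φ, sRefl a b ∈ Φ
  crystal : ∀ a ∈ Φ, ∀ b ∈ Φ, ∃ n : ℤ, copair b a = (n : ℝ)
  pos_subset : pos ⊆ Φ
  mem_pos_or : ∀ a ∈ Φ, (a ∈ pos ∧ -a ∉ pos) ∨ (a ∉ pos ∧ -a ∈ pos)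
  sroot_mem : ∀ i, sroot i ∈ pos
  sroot_indep : LinearIndependent ℝ sroot
  pos_nat_comb : ∀ a ∈ pos, ∃ c : Fin l → ℕ, a = ∑ i, (c i : ℝ) • sroot i
  fw_pairing : ∀ i j, copair (fw i) (sroot j) = if i = j then 1 else 0

namespace RootSystemCtx

variable {V : Type*} [NormedAddCommGroup V] [InnerProductSpace ℝ V] [FiniteDimensional ℝ V]
variable (R : RootSystemCtx V)

/-- The half sum of the positive roots, `ρ = Σ_i ϖ_i`. -/
def rho : V := ∑ i, R.fw i

/-- The Weyl group `W`, the subgroup of the isometry group of `V` generated by the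
reflections in the roots. -/
def weylGroup : Subgroup (V ≃ₗᵢ[ℝ] V) :=
  Subgroup.closure {g | ∃ a ∈ R.Φ, g = sRefl a}

/-- `γ` is an expression of `w` as a product of simple reflections. -/
def IsExpression (w : V ≃ₗᵢ[ℝ] V) (γ : List (Fin R.l)) : Prop :=
  w = (γ.map fun i => sRefl (R.sroot i)).prod

/-- `γ` is a reduced expression of `w`: an expression of minimal possible length. -/
def IsReducedExpression (w : V ≃ₗᵢ[ℝ] V) (γ : List (Fin R.l)) : Prop :=
  R.IsExpression w γ ∧ ∀ γ' : List (Fin R.l), R.IsExpression w γ' → γ.length ≤ γ'.length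

/-- A weight is dominant if it pairs nonnegatively with every simple coroot. -/
def IsDominant (v : V) : Prop := ∀ i, 0 ≤ copair v (R.sroot i)

/-- `d` is the dominant representative `{v}` of the Weyl group orbit of `v`. -/
def IsDomRep (v d : V) : Prop := R.IsDominant d ∧ ∃ w ∈ R.weylGroup, w v = d

end RootSystemCtx


/-!
If `d` is dominant, then `⟪d, ·⟫` is nonnegative on the positive roots, and since `w ∈ W`
permutes the roots, `∑_{α > 0} |⟪d, wα⟫| = ∑_{α > 0} |⟪d, α⟫| = ∑_{α > 0} ⟪d, α⟫`. As
`ρ = ½ ∑_{α > 0} α`, this gives `⟪w d, ρ⟫ = ⟪d, w⁻¹ρ⟫ ≤ ⟪d, ρ⟫`. Applied to `ν = w(μ - ρ)` and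
to `w⁻¹ν = μ - ρ`, and combined with `-⟪wρ, ρ⟫ ≤ ‖ρ‖²`, this yields both bounds.
-/

open Finset Module

section Reflection

variable {V : Type*} [NormedAddCommGroup V] [InnerProductSpace ℝ V]

lemma inner_nonneg_of_copair_nonneg {v a : V} (h : 0 ≤ copair v a) : 0 ≤ ⟪v, a⟫ := by
  rcases eq_or_ne a 0 with rfl | ha
  · simp
  · have hpos : 0 < ⟪a, a⟫ := real_inner_self_pos.mpr ha
    rw [copair] at h
    have := mul_nonneg h hpos.le
    rw [div_mul_cancel₀ _ hpos.ne'] at this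
    linarith

lemma copair_sum {ι : Type*} (s : Finset ι) (v : ι → V) (a : V) :
    copair (∑ i ∈ s, v i) a = ∑ i ∈ s, copair (v i) a := by
  simp only [copair, sum_inner, Finset.mul_sum, Finset.sum_div]

variable [FiniteDimensional ℝ V]

lemma sRefl_apply (a x : V) : sRefl a x = x - copair x a • a := by
  rw [sRefl, Submodule.reflection_orthogonal_apply, Submodule.reflection_singleton_apply, copair,
    real_inner_self_eq_norm_sq, real_inner_comm, two_smul]
  simp only [RCLike.ofReal_real_eq_id, id_eq]
  match_scalars <;> ring

lemma sRefl_self (a : V) : sRefl a a = -a :=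
  Submodule.reflection_orthogonalComplement_singleton_eq_neg a

lemma sRefl_sRefl (a x : V) : sRefl a (sRefl a x) = x :=
  Submodule.reflection_reflection _ x

end Reflection

namespace RootSystemCtx

variable {V : Type*} [NormedAddCommGroup V] [InnerProductSpace ℝ V] [FiniteDimensional ℝ V]
variable (R : RootSystemCtx V)

lemma neg_mem_Φ {a : V} (ha : a ∈ R.Φ) : -a ∈ R.Φ :=
  sRefl_self a ▸ R.refl_mem a ha a ha

lemma sroot_mem_Φ (i : Fin R.l) : R.sroot i ∈ R.Φ :=
  R.pos_subset (R.sroot_mem i)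

lemma neg_sroot_notMem_pos (i : Fin R.l) : -R.sroot i ∉ R.pos := by
  rcases R.mem_pos_or _ (R.sroot_mem_Φ i) with ⟨_, h⟩ | ⟨h, _⟩
  · exact h
  · exact absurd (R.sroot_mem i) h

lemma span_sroot_eq_top : Submodule.span ℝ (Set.range R.sroot) = ⊤ := by
  have hpos : ∀ b ∈ R.pos, b ∈ Submodule.span ℝ (Set.range R.sroot) := by
    intro b hb
    obtain ⟨c, rfl⟩ := R.pos_nat_comb b hb
    exact Submodule.sum_mem _ fun i _ =>
      Submodule.smul_mem _ _ (Submodule.subset_span ⟨i, rfl⟩)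
  rw [eq_top_iff, ← R.span_top, Submodule.span_le]
  intro a ha
  rcases R.mem_pos_or a ha with ⟨h, _⟩ | ⟨_, h⟩
  · exact hpos a h
  · simpa using Submodule.neg_mem _ (hpos _ h)

def simpleBasis : Basis (Fin R.l) ℝ V :=
  Basis.mk R.sroot_indep R.span_sroot_eq_top.ge

@[simp]
lemma simpleBasis_apply (i : Fin R.l) : R.simpleBasis i = R.sroot i :=
  Basis.mk_apply _ _ i

lemma simpleBasis_repr_nonneg {a : V} (ha : a ∈ R.pos) (j : Fin R.l) :
    0 ≤ R.simpleBasis.repr a j := by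
  obtain ⟨c, rfl⟩ := R.pos_nat_comb a ha
  simp_rw [← simpleBasis_apply, Basis.repr_sum_self]
  positivity

lemma mem_pos_of_simpleBasis_repr_pos {a : V} (ha : a ∈ R.Φ) {j : Fin R.l}
    (h : 0 < R.simpleBasis.repr a j) : a ∈ R.pos := by
  rcases R.mem_pos_or a ha with ⟨ha', _⟩ | ⟨_, hna⟩
  · exact ha'
  · have := R.simpleBasis_repr_nonneg hna j
    simp only [map_neg, Finsupp.coe_neg, Pi.neg_apply, Left.nonneg_neg_iff] at this
    linarith

lemma eq_sroot_of_simpleBasis_repr_eq_zero {a : V} (ha : a ∈ R.pos) {i : Fin R.l}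
    (h : ∀ j ≠ i, R.simpleBasis.repr a j = 0) : a = R.sroot i := by
  have ha' : a = R.simpleBasis.repr a i • R.sroot i := by
    conv_lhs => rw [← R.simpleBasis.sum_repr a]
    rw [Finset.sum_eq_single i (fun j _ hj => by rw [h j hj, zero_smul]) (by simp),
      simpleBasis_apply]
  rcases R.reduced _ (R.sroot_mem_Φ i) _ (ha' ▸ R.pos_subset ha) with h1 | h1
  · rwa [h1, one_smul] at ha'
  · rw [h1, neg_one_smul] at ha'
    exact absurd (ha' ▸ ha) (R.neg_sroot_notMem_pos i)

lemma sRefl_sroot_mem_pos {a : V} (ha : a ∈ R.pos) {i : Fin R.l} (hne : a ≠ R.sroot i) :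
    sRefl (R.sroot i) a ∈ R.pos := by
  obtain ⟨j, hji, hj⟩ : ∃ j ≠ i, 0 < R.simpleBasis.repr a j := by
    by_contra! h
    exact hne (R.eq_sroot_of_simpleBasis_repr_eq_zero ha fun j hj =>
      le_antisymm (h j hj) (R.simpleBasis_repr_nonneg ha j))
  refine R.mem_pos_of_simpleBasis_repr_pos
    (R.refl_mem _ (R.sroot_mem_Φ i) a (R.pos_subset ha)) (j := j) ?_
  rwa [sRefl_apply, ← simpleBasis_apply, map_sub, map_smul, Basis.repr_self, Finsupp.sub_apply,
    Finsupp.smul_apply, Finsupp.single_eq_of_ne hji, smul_zero, sub_zero]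

lemma sRefl_sroot_ne_sroot {a : V} (ha : a ∈ R.pos) (i : Fin R.l) :
    sRefl (R.sroot i) a ≠ R.sroot i := by
  intro h
  have : a = -R.sroot i := by rw [← sRefl_sRefl (R.sroot i) a, h, sRefl_self]
  exact R.neg_sroot_notMem_pos i (this ▸ ha)

lemma inner_sum_pos_sroot (i : Fin R.l) :
    ⟪∑ a ∈ R.pos, a, R.sroot i⟫ = ⟪R.sroot i, R.sroot i⟫ := by
  classical
  set s := sRefl (R.sroot i)
  have hs : ∀ a ∈ R.pos.erase (R.sroot i), s a ∈ R.pos.erase (R.sroot i) := fun a ha =>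
    have ha := Finset.mem_erase.mp ha
    Finset.mem_erase.mpr ⟨R.sRefl_sroot_ne_sroot ha.2 i, R.sRefl_sroot_mem_pos ha.2 ha.1⟩
  -- `s` permutes the other positive roots and negates their pairing with `αᵢ`
  have hS : ∑ a ∈ R.pos.erase (R.sroot i), ⟪a, R.sroot i⟫
      = ∑ a ∈ R.pos.erase (R.sroot i), -⟪a, R.sroot i⟫ := by
    refine Finset.sum_nbij' s s hs hs (fun a _ => sRefl_sRefl _ a)
      (fun a _ => sRefl_sRefl _ a) fun a _ => ?_
    rw [← s.inner_map_map, sRefl_self, inner_neg_right]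
  rw [Finset.sum_neg_distrib, eq_neg_iff_add_eq_zero, ← two_mul, mul_eq_zero] at hS
  rw [sum_inner, ← Finset.add_sum_erase _ _ (R.sroot_mem i), hS.resolve_left two_ne_zero,
    add_zero]

lemma inner_rho_sroot (i : Fin R.l) : ⟪R.rho, R.sroot i⟫ = ⟪R.sroot i, R.sroot i⟫ / 2 := by
  have h : copair R.rho (R.sroot i) = 1 := by
    simp [rho, copair_sum, R.fw_pairing]
  have hpos : 0 < ⟪R.sroot i, R.sroot i⟫ :=
    real_inner_self_pos.mpr (R.nonzero _ (R.sroot_mem_Φ i))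
  rw [copair, div_eq_one_iff_eq hpos.ne'] at h
  linarith

lemma rho_eq_half_sum_pos : R.rho = (2 : ℝ)⁻¹ • ∑ a ∈ R.pos, a :=
  InnerProductSpace.ext_inner_right_basis R.simpleBasis fun i => by
    rw [simpleBasis_apply, inner_rho_sroot, real_inner_smul_left, inner_sum_pos_sroot]
    ring

lemma weyl_apply_mem_Φ {w : V ≃ₗᵢ[ℝ] V} (hw : w ∈ R.weylGroup) {a : V} (ha : a ∈ R.Φ) :
    w a ∈ R.Φ := by
  induction hw using Subgroup.closure_induction'' generalizing a with
  | mem g hg =>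
    obtain ⟨b, hb, rfl⟩ := hg
    exact R.refl_mem b hb a ha
  | inv_mem g hg =>
    obtain ⟨b, hb, rfl⟩ := hg
    exact R.refl_mem b hb a ha
  | one => exact ha
  | mul x y _ _ hx hy => exact hx (hy ha)

lemma weyl_apply_mem_Φ_iff {w : V ≃ₗᵢ[ℝ] V} (hw : w ∈ R.weylGroup) (a : V) :
    w a ∈ R.Φ ↔ a ∈ R.Φ := by
  refine ⟨fun h => ?_, R.weyl_apply_mem_Φ hw⟩
  simpa using R.weyl_apply_mem_Φ (inv_mem hw) h

lemma Φ_eq_pos_union_neg [DecidableEq V] : R.Φ = R.pos ∪ R.pos.image Neg.neg := by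
  ext a
  simp only [Finset.mem_union, Finset.mem_image, neg_eq_iff_eq_neg, exists_eq_right]
  refine ⟨fun ha => (R.mem_pos_or a ha).imp And.left And.right, ?_⟩
  rintro (ha | ha)
  · exact R.pos_subset ha
  · simpa using R.neg_mem_Φ (R.pos_subset ha)

lemma sum_Φ_eq_two_mul_sum_pos {f : V → ℝ} (hf : ∀ a, f (-a) = f a) :
    ∑ a ∈ R.Φ, f a = 2 * ∑ a ∈ R.pos, f a := by
  classical
  have hdisj : Disjoint R.pos (R.pos.image Neg.neg) := by
    refine Finset.disjoint_left.mpr fun a ha ha' => ?_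
    obtain ⟨b, hb, rfl⟩ := Finset.mem_image.mp ha'
    rcases R.mem_pos_or b (R.pos_subset hb) with ⟨_, h⟩ | ⟨h, _⟩
    · exact h ha
    · exact h hb
  rw [R.Φ_eq_pos_union_neg, Finset.sum_union hdisj, Finset.sum_image neg_injective.injOn]
  simp only [hf]
  ring

lemma sum_pos_abs_inner_weyl_apply {w : V ≃ₗᵢ[ℝ] V} (hw : w ∈ R.weylGroup) (v : V) :
    ∑ a ∈ R.pos, |⟪v, w a⟫| = ∑ a ∈ R.pos, |⟪v, a⟫| := by
  have hΦ : ∑ a ∈ R.Φ, |⟪v, w a⟫| = ∑ a ∈ R.Φ, |⟪v, a⟫| :=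
    Finset.sum_equiv w.toEquiv (fun a => (R.weyl_apply_mem_Φ_iff hw a).symm) fun _ _ => rfl
  rw [R.sum_Φ_eq_two_mul_sum_pos (by simp), R.sum_Φ_eq_two_mul_sum_pos (by simp)] at hΦ
  linarith

variable {R}

lemma IsDominant.inner_nonneg {d a : V} (hd : R.IsDominant d) (ha : a ∈ R.pos) :
    0 ≤ ⟪d, a⟫ := by
  obtain ⟨c, rfl⟩ := R.pos_nat_comb a ha
  rw [inner_sum]
  exact Finset.sum_nonneg fun i _ => by
    rw [real_inner_smul_right]
    exact mul_nonneg (by positivity) (inner_nonneg_of_copair_nonneg (hd i))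

lemma IsDominant.inner_weyl_apply_sum_pos_le {d : V} (hd : R.IsDominant d)
    {w : V ≃ₗᵢ[ℝ] V} (hw : w ∈ R.weylGroup) :
    ⟪d, w (∑ a ∈ R.pos, a)⟫ ≤ ⟪d, ∑ a ∈ R.pos, a⟫ := calc
  ⟪d, w (∑ a ∈ R.pos, a)⟫ = ∑ a ∈ R.pos, ⟪d, w a⟫ := by rw [map_sum, inner_sum]
  _ ≤ ∑ a ∈ R.pos, |⟪d, w a⟫| := Finset.sum_le_sum fun a _ => le_abs_self _
  _ = ∑ a ∈ R.pos, ⟪d, a⟫ := by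
    rw [R.sum_pos_abs_inner_weyl_apply hw]
    exact Finset.sum_congr rfl fun a ha => abs_of_nonneg (hd.inner_nonneg ha)
  _ = ⟪d, ∑ a ∈ R.pos, a⟫ := (inner_sum _ _ _).symm

lemma IsDominant.inner_weyl_apply_rho_le {d : V} (hd : R.IsDominant d)
    {w : V ≃ₗᵢ[ℝ] V} (hw : w ∈ R.weylGroup) : ⟪w d, R.rho⟫ ≤ ⟪d, R.rho⟫ := by
  rw [w.inner_map_eq_flip, R.rho_eq_half_sum_pos, map_smul, real_inner_smul_right,
    real_inner_smul_right]
  have := hd.inner_weyl_apply_sum_pos_le (inv_mem hw)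
  rw [LinearIsometryEquiv.coe_inv] at this
  linarith

end RootSystemCtx

theorem statement4_general {V : Type*} [NormedAddCommGroup V] [InnerProductSpace ℝ V]
    [FiniteDimensional ℝ V] (R : RootSystemCtx V)
    (s : V ≃ₗᵢ[ℝ] V)
    (lam : V) (μ : V) (hμ : R.IsDomRep (lam + s lam) μ)
    (ν : V) (hν : R.IsDomRep (μ - R.rho) ν) :
    0 ≤ 2 * ⟪ν - (μ - R.rho), R.rho⟫ ∧
      2 * ⟪ν - (μ - R.rho), R.rho⟫ ≤ ‖(2 : ℝ) • R.rho‖ ^ 2 := by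
  obtain ⟨hμ, -⟩ := hμ
  obtain ⟨hν, w, hw, rfl⟩ := hν
  have hlower : ⟪μ - R.rho, R.rho⟫ ≤ ⟪w (μ - R.rho), R.rho⟫ := by
    simpa using hν.inner_weyl_apply_rho_le (inv_mem hw)
  have hupper : ⟪w μ, R.rho⟫ ≤ ⟪μ, R.rho⟫ := hμ.inner_weyl_apply_rho_le hw
  have hcs : -⟪w R.rho, R.rho⟫ ≤ ‖R.rho‖ ^ 2 := by
    simpa [← inner_neg_left, sq] using real_inner_le_norm (-w R.rho) R.rho
  simp only [map_sub, inner_sub_left, real_inner_self_eq_norm_sq] at hlower ⊢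
  rw [norm_smul, mul_pow, Real.norm_two]
  constructor <;> linarith

/-- For an involution `s ∈ W`, with `μ := {λ + s(λ)}` and
`g(λ) := 2⟨{μ − ρ} − (μ − ρ), ρ⟩`, one has `0 ≤ g(λ) ≤ ‖2ρ‖²`.  Here `μ` and `{μ − ρ}`
are encoded by the hypotheses that they are the dominant representatives of the Weyl
orbits of `λ + s(λ)` and `μ − ρ` respectively. -/
theorem statement4 {V : Type*} [NormedAddCommGroup V] [InnerProductSpace ℝ V]
    [FiniteDimensional ℝ V] (R : RootSystemCtx V)
    (s : V ≃ₗᵢ[ℝ] V) (hs : s ∈ R.weylGroup) (hinv : s * s = 1)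
    (lam : V) (μ : V) (hμ : R.IsDomRep (lam + s lam) μ)
    (ν : V) (hν : R.IsDomRep (μ - R.rho) ν) :
    0 ≤ 2 * ⟪ν - (μ - R.rho), R.rho⟫ ∧
      2 * ⟪ν - (μ - R.rho), R.rho⟫ ≤ ‖(2 : ℝ) • R.rho‖ ^ 2 :=
  statement4_general R s lam μ hμ ν hν
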